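/- Assume πU₂ < 1. Then, pointwise on the underlying probability space, B ≤ (1/(1 − πU₂))·( sup_{v∈[0,1/2]} |ε̃(v)| + sup_{v∈[0,1/2]} |ỹ(v)| ). (Lemma 3 of the paper.) -/

import Mathlib

/-!
Take `j ≤ T/2` with `|b_j| = B` (conjugate symmetry allows this) and evaluate at `v = j/T`.
There `ỹ - ε̃` is the DFT of the noiseless signal, which equals `b_j` plus the leakage
`Σ_{k ≠ j} b_k D(k - j)` of the other harmonics, `D(e)` being the mean of the first `n` powers
of the root of unity `exp(2πie/T)`. Bounding that geometric sum and using Jordan's inequality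
gives `|D(d)| ≤ T/(2nd) ≤ (π/2) A_{2dg-1}` for `1 ≤ d ≤ T/2` once `2gT < n`; as `|D|` is
`T`-periodic and even, the leakage is at most `2 B Σ_{d ≤ T/2} (π/2) A_{2dg-1} ≤ πU₂ B`.
Hence `B ≤ |ỹ(v)| + |ε̃(v)| + πU₂ B`.
-/

open MeasureTheory ProbabilityTheory Complex Real

/-- `A_m := sup{ |sin(πν)|/(πν) : ν ∈ [m, m+1] }`. -/
noncomputable def sideLobeBound (m : ℕ) : ℝ :=
  ⨆ ν ∈ Set.Icc (m : ℝ) ((m : ℝ) + 1), |Real.sin (Real.pi * ν)| / (Real.pi * ν)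

/-- `U₂ := Σ_{j=1}^{⌊(n−1)/(4g)⌋} A_{2jg−1}`. -/
noncomputable def leakageU₂ (n g : ℕ) : ℝ :=
  ∑ j ∈ Finset.Icc (1 : ℤ) ⌊((n : ℝ) - 1) / (4 * g)⌋,
    sideLobeBound ((2 * j).toNat * g - 1)

open Finset ComplexConjugate

lemma sideLobeBound_nonneg (m : ℕ) : 0 ≤ sideLobeBound m :=
  Real.iSup_nonneg fun _ => Real.iSup_nonneg fun hν =>
    div_nonneg (abs_nonneg _) (mul_nonneg pi_pos.le ((Nat.cast_nonneg m).trans hν.1))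

lemma one_div_pi_mul_add_half_le_sideLobeBound {m : ℕ} (hm : 0 < m) :
    1 / (π * (m + 1 / 2)) ≤ sideLobeBound m := by
  have hm' : (0 : ℝ) < m := Nat.cast_pos.2 hm
  have hbdd : BddAbove (⋃ ν, Set.range fun _ : ν ∈ Set.Icc (m : ℝ) (m + 1) =>
      |Real.sin (π * ν)| / (π * ν)) := by
    refine ⟨1 / (π * m), ?_⟩
    simp only [upperBounds, Set.mem_iUnion, Set.mem_range]
    rintro _ ⟨ν, hν, rfl⟩
    have := pi_pos
    gcongr
    · exact abs_sin_le_one _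
    · exact hν.1
  have hsin : |Real.sin (π * (m + 1 / 2))| = 1 := by
    rw [show π * (m + 1 / 2) = m * π + π / 2 by ring, Real.sin_add_pi_div_two,
      Real.cos_nat_mul_pi, abs_pow, abs_neg, abs_one, one_pow]
  calc 1 / (π * (m + 1 / 2)) = |Real.sin (π * (m + 1 / 2))| / (π * (m + 1 / 2)) := by
        rw [hsin]
    _ ≤ sideLobeBound m :=
      le_ciSup₂ (f := fun ν (_ : ν ∈ Set.Icc (m : ℝ) (m + 1)) => |Real.sin (π * ν)| / (π * ν))
        hbdd _ ⟨by linarith, by linarith⟩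

lemma norm_geom_sum_le {z : ℂ} (hz : ‖z‖ = 1) (hz1 : z ≠ 1) (n : ℕ) :
    ‖∑ t ∈ range n, z ^ t‖ ≤ 2 / ‖z - 1‖ := by
  rw [geom_sum_eq hz1, norm_div]
  gcongr
  calc ‖z ^ n - 1‖ ≤ ‖z ^ n‖ + ‖(1 : ℂ)‖ := norm_sub_le _ _
    _ = 2 := by rw [norm_pow, hz, one_pow, norm_one]; norm_num

/-- The DFT at `j/T` of the harmonic of frequency `(j + e)/T` (see `dtft_sum_harmonics`). -/
noncomputable def harmonicKernel (n T : ℕ) (e : ℤ) : ℂ :=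
  (1 / (n : ℂ)) * ∑ t : Fin n, Complex.exp (2 * π * I * e * ((t : ℕ) + 1) / T)

section harmonicKernel

variable {n T : ℕ}

lemma harmonicKernel_zero (hn : n ≠ 0) : harmonicKernel n T 0 = 1 := by
  simp [harmonicKernel, hn]

lemma harmonicKernel_periodic (hT : T ≠ 0) : Function.Periodic (harmonicKernel n T) T := by
  intro e
  unfold harmonicKernel
  congr 1
  refine sum_congr rfl fun t _ => ?_
  rw [show 2 * π * I * ((e + T : ℤ) : ℂ) * ((t : ℕ) + 1) / T
      = 2 * π * I * e * ((t : ℕ) + 1) / T + ((t + 1 : ℕ) : ℂ) * (2 * π * I) by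
    push_cast; field_simp, Complex.exp_add, Complex.exp_nat_mul_two_pi_mul_I, mul_one]

lemma harmonicKernel_neg (e : ℤ) : harmonicKernel n T (-e) = conj (harmonicKernel n T e) := by
  simp only [harmonicKernel, map_mul, map_sum, ← Complex.exp_conj, map_div₀, map_one,
    map_natCast, map_add, map_ofNat, conj_ofReal, conj_I, map_intCast, Int.cast_neg]
  congr 1
  refine sum_congr rfl fun t _ => ?_
  congr 1
  ring

lemma norm_harmonicKernel_le (e : ℤ) (hsin : Real.sin (π * e / T) ≠ 0) :
    ‖harmonicKernel n T e‖ ≤ 1 / (n * |Real.sin (π * e / T)|) := by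
  set z := Complex.exp (I * ((2 * π * e / T : ℝ) : ℂ))
  have hz : ‖z‖ = 1 := norm_exp_I_mul_ofReal _
  have hz1 : ‖z - 1‖ = 2 * |Real.sin (π * e / T)| := by
    rw [norm_exp_I_mul_ofReal_sub_one, norm_mul, Real.norm_eq_abs, Real.norm_eq_abs]
    norm_num
    ring_nf
  have hz1' : z ≠ 1 := by
    intro h; rw [h, sub_self, norm_zero] at hz1; simp [hsin] at hz1
  have hsum : ∑ t : Fin n, Complex.exp (2 * π * I * e * ((t : ℕ) + 1) / T)
      = z * ∑ t ∈ range n, z ^ t := by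
    rw [Fin.sum_univ_eq_sum_range (fun t => Complex.exp (2 * π * I * e * (t + 1) / T)), mul_sum]
    refine sum_congr rfl fun t _ => ?_
    rw [← pow_succ', ← Complex.exp_nat_mul]
    push_cast; ring_nf
  have hn : ‖(1 / (n : ℂ))‖ = 1 / n := by simp
  rw [harmonicKernel, hsum, norm_mul, norm_mul, hz, one_mul, hn]
  calc 1 / (n : ℝ) * ‖∑ t ∈ range n, z ^ t‖ ≤ 1 / n * (2 / ‖z - 1‖) := by
        gcongr; exact norm_geom_sum_le hz hz1' n
    _ = 1 / (n * |Real.sin (π * e / T)|) := by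
        rw [hz1]; field_simp

lemma norm_harmonicKernel_natCast_le {d : ℕ} (hd : 0 < d) (hdT : 2 * d ≤ T) :
    ‖harmonicKernel n T d‖ ≤ T / (2 * n * d) := by
  have hd' : (0 : ℝ) < d := Nat.cast_pos.2 hd
  have hT : (0 : ℝ) < T := by exact_mod_cast (show 0 < T by omega)
  have hdT' : (2 * d : ℝ) ≤ T := by exact_mod_cast hdT
  have hjordan : 2 * d / T ≤ Real.sin (π * d / T) := by
    have h := Real.mul_le_sin (x := π * d / T) (by positivity)
      (by rw [div_le_div_iff₀ hT two_pos]; nlinarith [pi_pos])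
    calc (2 * d / T : ℝ) = 2 / π * (π * d / T) := by field_simp
      _ ≤ _ := h
  have hsin : 0 < Real.sin (π * d / T) := lt_of_lt_of_le (by positivity) hjordan
  calc ‖harmonicKernel n T d‖ ≤ 1 / (n * |Real.sin (π * (d : ℤ) / T)|) :=
        norm_harmonicKernel_le d (by exact_mod_cast hsin.ne')
    _ ≤ T / (2 * n * d) := by
        rcases Nat.eq_zero_or_pos n with rfl | hn
        · simp
        have hn' : (0 : ℝ) < n := Nat.cast_pos.2 hn
        rw [Int.cast_natCast, abs_of_pos hsin, div_le_div_iff₀ (by positivity) (by positivity)]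
        calc 1 * (2 * n * d : ℝ) = (n * T) * (2 * d / T) := by field_simp
          _ ≤ (n * T) * Real.sin (π * d / T) := by gcongr
          _ = T * (n * Real.sin (π * d / T)) := by ring

lemma norm_harmonicKernel_natCast_le_sideLobeBound {g d : ℕ} (hg : 0 < g) (hd : 0 < d)
    (hdT : 2 * d ≤ T) (hTn : 2 * g * T ≤ n) :
    ‖harmonicKernel n T d‖ ≤ π / 2 * sideLobeBound (2 * d * g - 1) := by
  have hdg : 2 ≤ 2 * d * g := by
    rw [mul_assoc]; exact Nat.le_mul_of_pos_right 2 (Nat.mul_pos hd hg)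
  have hcast : ((2 * d * g - 1 : ℕ) : ℝ) = 2 * d * g - 1 := by
    rw [Nat.cast_sub (by omega)]; push_cast; ring
  have hdg' : (2 : ℝ) ≤ 2 * d * g := by exact_mod_cast hdg
  have hTn' : (2 * g * T : ℝ) ≤ n := by exact_mod_cast hTn
  have hd' : (0 : ℝ) < d := Nat.cast_pos.2 hd
  have hn' : (0 : ℝ) < n := by exact_mod_cast (show 0 < n by nlinarith)
  calc ‖harmonicKernel n T d‖ ≤ T / (2 * n * d) := norm_harmonicKernel_natCast_le hd hdT
    _ ≤ 1 / (4 * d * g - 1) := by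
        rw [div_le_div_iff₀ (by positivity) (by linarith)]
        nlinarith
    _ = π / 2 * (1 / (π * ((2 * d * g - 1 : ℕ) + 1 / 2))) := by
        rw [hcast]; field_simp; ring
    _ ≤ π / 2 * sideLobeBound (2 * d * g - 1) := by
        gcongr
        exact one_div_pi_mul_add_half_le_sideLobeBound (by omega)

end harmonicKernel

lemma Function.Periodic.sum_range_comp_sub {M : Type*} [AddCancelCommMonoid M] {F : ℤ → M}
    {T : ℕ} (hF : Function.Periodic F T) (j : ℕ) :
    ∑ k ∈ range T, F (k - j) = ∑ k ∈ range T, F k := by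
  induction j with
  | zero => simp
  | succ j ih =>
    rw [← ih]
    have h := sum_range_succ (fun k : ℕ => F (k - (j + 1 : ℕ))) T
    rw [sum_range_succ', show F (T - (j + 1 : ℕ)) = F ((0 : ℕ) - (j + 1 : ℕ)) by
      rw [Nat.cast_zero, zero_sub, sub_eq_neg_add]; exact hF _] at h
    refine (add_right_cancel h).symm.trans (sum_congr rfl fun k _ => ?_)
    push_cast; ring_nf

lemma sum_range_le_add_two_mul_sum_Icc {T : ℕ} {f : ℕ → ℝ} (hf : ∀ d, 0 ≤ f d)
    (hsymm : ∀ d ≤ T, f (T - d) = f d) :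
    ∑ d ∈ range T, f d ≤ f 0 + 2 * ∑ d ∈ Icc 1 (T / 2), f d := by
  rcases Nat.eq_zero_or_pos T with rfl | hT
  · simpa using hf 0
  have hfirst : ∑ d ∈ range (T / 2 + 1), f d = f 0 + ∑ d ∈ Icc 1 (T / 2), f d := by
    rw [range_eq_Ico, sum_eq_sum_Ico_succ_bot (Nat.succ_pos _), zero_add, Nat.succ_eq_add_one,
      Ico_add_one_right_eq_Icc]
  have hsecond : ∑ d ∈ Ico (T / 2 + 1) T, f d ≤ ∑ d ∈ Icc 1 (T / 2), f d :=
    calc ∑ d ∈ Ico (T / 2 + 1) T, f d = ∑ d ∈ Ico (T / 2 + 1) T, f (T - d) :=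
          sum_congr rfl fun d hd => (hsymm d (mem_Ico.1 hd).2.le).symm
      _ = ∑ d ∈ Ico 1 (T - T / 2), f d := by
          rw [sum_Ico_reflect f _ (Nat.le_succ T), show T + 1 - T = 1 by omega,
            show T + 1 - (T / 2 + 1) = T - T / 2 by omega]
      _ ≤ ∑ d ∈ Icc 1 (T / 2), f d :=
          sum_le_sum_of_subset_of_nonneg
            (fun d hd => by simp only [mem_Ico, mem_Icc] at hd ⊢; omega) fun d _ _ => hf d
  rw [← sum_range_add_sum_Ico f (show T / 2 + 1 ≤ T by omega), hfirst]
  linarith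

lemma sum_Icc_sideLobeBound_le_leakageU₂ {n g T : ℕ} (hg : 0 < g) (hTn : 2 * g * T < n) :
    ∑ d ∈ Icc 1 (T / 2), sideLobeBound (2 * d * g - 1) ≤ leakageU₂ n g := by
  have hfloor : ((T / 2 : ℕ) : ℤ) ≤ ⌊((n : ℝ) - 1) / (4 * g)⌋ := by
    have h1 : ((T / 2 : ℕ) : ℝ) ≤ T / 2 := Nat.cast_div_le
    have h2 : (2 * g * T : ℝ) + 1 ≤ n := by exact_mod_cast hTn
    rw [Int.le_floor, Int.cast_natCast, le_div_iff₀ (by positivity)]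
    nlinarith
  calc ∑ d ∈ Icc 1 (T / 2), sideLobeBound (2 * d * g - 1)
      = ∑ j ∈ Icc (1 : ℤ) (T / 2 : ℕ), sideLobeBound ((2 * j).toNat * g - 1) := by
        refine sum_nbij' (fun d => (d : ℤ)) Int.toNat ?_ ?_ ?_ ?_ ?_ <;>
          intro a ha <;> simp only [mem_Icc] at ha ⊢
        any_goals omega
        rw [show (2 * (a : ℤ)).toNat = 2 * a by omega]
    _ ≤ leakageU₂ n g :=
        sum_le_sum_of_subset_of_nonneg (Icc_subset_Icc_right hfloor)
          fun _ _ _ => sideLobeBound_nonneg _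

lemma sum_norm_harmonicKernel_erase_le {n g T j : ℕ} (hg : 0 < g) (hTn : 2 * g * T < n)
    (hj : j < T) :
    ∑ k ∈ (range T).erase j, ‖harmonicKernel n T (k - j)‖ ≤ π * leakageU₂ n g := by
  set F : ℤ → ℝ := fun e => ‖harmonicKernel n T e‖
  have hper : Function.Periodic F T := (harmonicKernel_periodic (by omega)).comp norm
  have heven : ∀ e, F (-e) = F e := fun e => by
    simp only [F, harmonicKernel_neg, Complex.norm_conj]
  have hsymm : ∀ d ≤ T, F ((T - d : ℕ) : ℤ) = F d := fun d hd => by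
    rw [Nat.cast_sub hd, sub_eq_neg_add, hper, heven]
  calc ∑ k ∈ (range T).erase j, F (k - j) = ∑ k ∈ range T, F (k - j) - F 0 := by
        rw [sum_erase_eq_sub (mem_range.2 hj), sub_self]
    _ = ∑ d ∈ range T, F d - F 0 := by rw [hper.sum_range_comp_sub]
    _ ≤ 2 * ∑ d ∈ Icc 1 (T / 2), F d := by
        have := sum_range_le_add_two_mul_sum_Icc (f := fun d : ℕ => F d)
          (fun _ => norm_nonneg _) hsymm
        simp only [Nat.cast_zero] at this
        linarith
    _ ≤ 2 * ∑ d ∈ Icc 1 (T / 2), π / 2 * sideLobeBound (2 * d * g - 1) := by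
        gcongr with d hd
        have hd := mem_Icc.1 hd
        exact norm_harmonicKernel_natCast_le_sideLobeBound hg (by omega) (by omega) hTn.le
    _ ≤ π * leakageU₂ n g := by
        rw [← mul_sum, ← mul_assoc, show 2 * (π / 2) = π by ring]
        gcongr
        exact sum_Icc_sideLobeBound_le_leakageU₂ hg hTn

lemma norm_le_norm_sum_harmonicKernel_add {n g T j : ℕ} {b : ℕ → ℂ} {B : ℝ}
    (hB : ∀ k < T, ‖b k‖ ≤ B) (hg : 0 < g) (hTn : 2 * g * T < n) (hj : j < T) :
    ‖b j‖ ≤ ‖∑ k ∈ range T, b k * harmonicKernel n T (k - j)‖ + π * leakageU₂ n g * B := by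
  have hB0 : 0 ≤ B := (norm_nonneg _).trans (hB j hj)
  have hsplit :=
    add_sum_erase (range T) (fun k => b k * harmonicKernel n T (k - j)) (mem_range.2 hj)
  rw [sub_self, harmonicKernel_zero (by omega), mul_one] at hsplit
  have hleak : ‖∑ k ∈ (range T).erase j, b k * harmonicKernel n T (k - j)‖
      ≤ π * leakageU₂ n g * B :=
    calc _ ≤ ∑ k ∈ (range T).erase j, ‖b k‖ * ‖harmonicKernel n T (k - j)‖ :=
          (norm_sum_le _ _).trans_eq (sum_congr rfl fun _ _ => norm_mul _ _)
      _ ≤ ∑ k ∈ (range T).erase j, B * ‖harmonicKernel n T (k - j)‖ := by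
          gcongr with k hk
          exact hB k (mem_range.1 (mem_of_mem_erase hk))
      _ ≤ B * (π * leakageU₂ n g) := by
          rw [← mul_sum]; gcongr; exact sum_norm_harmonicKernel_erase_le hg hTn hj
      _ = π * leakageU₂ n g * B := mul_comm _ _
  calc ‖b j‖ = ‖∑ k ∈ range T, b k * harmonicKernel n T (k - j)
        - ∑ k ∈ (range T).erase j, b k * harmonicKernel n T (k - j)‖ := by
        rw [← hsplit, add_sub_cancel_right]
    _ ≤ _ := (norm_sub_le _ _).trans (by gcongr)

/-- `c t` is the sample at time `t + 1`. -/
noncomputable def dtft {n : ℕ} (c : Fin n → ℂ) (v : ℝ) : ℂ :=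
  (1 / (n : ℂ)) * ∑ t : Fin n, c t * Complex.exp (-(2 * π * I * v * ((t : ℕ) + 1)))

section dtft

variable {n : ℕ}

lemma dtft_add (c c' : Fin n → ℂ) (v : ℝ) :
    dtft (fun t => c t + c' t) v = dtft c v + dtft c' v := by
  simp only [dtft, add_mul, sum_add_distrib, mul_add]

lemma norm_dtft_le (c : Fin n → ℂ) (v : ℝ) : ‖dtft c v‖ ≤ 1 / n * ∑ t, ‖c t‖ := by
  rw [dtft, norm_mul, norm_div, norm_one, Complex.norm_natCast]
  gcongr
  refine (norm_sum_le _ _).trans_eq (sum_congr rfl fun t _ => ?_)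
  rw [norm_mul, show -(2 * π * I * v * ((t : ℕ) + 1))
      = I * ((-(2 * π * v * ((t : ℕ) + 1)) : ℝ) : ℂ) by push_cast; ring,
    norm_exp_I_mul_ofReal, mul_one]

lemma norm_dtft_le_biSup (c : Fin n → ℂ) {s : Set ℝ} {v : ℝ} (hv : v ∈ s) :
    ‖dtft c v‖ ≤ ⨆ u ∈ s, ‖dtft c u‖ := by
  refine le_ciSup₂ (f := fun u (_ : u ∈ s) => ‖dtft c u‖) ⟨1 / n * ∑ t, ‖c t‖, ?_⟩ v hv
  simp only [upperBounds, Set.mem_iUnion, Set.mem_range]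
  rintro _ ⟨u, _, rfl⟩
  exact norm_dtft_le c u

lemma dtft_sum_harmonics (b : ℕ → ℂ) (s : Finset ℕ) (T j : ℕ) :
    dtft (fun t : Fin n => ∑ k ∈ s, b k * Complex.exp (2 * π * I * k * ((t : ℕ) + 1 : ℕ) / T))
      ((j : ℝ) / T) = ∑ k ∈ s, b k * harmonicKernel n T (k - j) := by
  simp only [dtft, harmonicKernel, sum_mul, mul_sum]
  rw [sum_comm]
  refine sum_congr rfl fun k _ => sum_congr rfl fun t _ => ?_
  rw [mul_assoc, ← Complex.exp_add]
  push_cast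
  ring_nf

end dtft

lemma exists_two_mul_le_norm_eq_of_conj_symm {T j : ℕ} {b : ℕ → ℂ}
    (hbconj : ∀ j, 1 ≤ j → j ≤ T - 1 → b j = conj (b (T - j))) (hj : j < T) :
    ∃ j' < T, 2 * j' ≤ T ∧ ‖b j'‖ = ‖b j‖ := by
  rcases le_or_gt (2 * j) T with h | h
  · exact ⟨j, hj, h, rfl⟩
  · refine ⟨T - j, by omega, by omega, ?_⟩
    rw [hbconj j (by omega) (by omega), Complex.norm_conj]

theorem magnitude_data_driven_bound_general
    {Ω : Type*}
    (n : ℕ)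
    (ε : Fin n → Ω → ℝ)
    (εdft : ℝ → Ω → ℂ)
    (hεdft : ∀ v ω, εdft v ω = (1 / (n : ℂ)) *
        ∑ t : Fin n, (ε t ω : ℂ) * Complex.exp (-(2 * Real.pi * Complex.I * v * ((t : ℕ) + 1))))
    (g T : ℕ) (hg2 : 2 ≤ g)
    (hTn : (T : ℝ) < n / (2 * g))
    (b : ℕ → ℂ)
    (hbconj : ∀ j, 1 ≤ j → j ≤ T - 1 → b j = starRingEnd ℂ (b (T - j)))
    (μ : ℕ → ℂ)
    (hμ : ∀ t, μ t = ∑ j ∈ Finset.range T,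
        b j * Complex.exp (2 * Real.pi * Complex.I * j * t / T))
    (ydft : ℝ → Ω → ℂ)
    (hydft : ∀ v ω, ydft v ω = (1 / (n : ℂ)) *
        ∑ t : Fin n, (μ ((t : ℕ) + 1) + (ε t ω : ℂ)) *
          Complex.exp (-(2 * Real.pi * Complex.I * v * ((t : ℕ) + 1))))
    (B : ℝ) (hB : IsGreatest {x : ℝ | ∃ j < T, b j ≠ 0 ∧ x = ‖b j‖} B)
    (hU₂ : Real.pi * leakageU₂ n g < 1) :
    ∀ ω : Ω, B ≤ (1 / (1 - Real.pi * leakageU₂ n g)) *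
        ((⨆ v ∈ Set.Icc (0 : ℝ) (1 / 2), ‖εdft v ω‖) +
          ⨆ v ∈ Set.Icc (0 : ℝ) (1 / 2), ‖ydft v ω‖) := by
  intro ω
  obtain rfl : εdft = fun v w => dtft (fun t => (ε t w : ℂ)) v := funext₂ hεdft
  obtain rfl : ydft = fun v w => dtft (fun t => μ ((t : ℕ) + 1) + ε t w) v := funext₂ hydft
  beta_reduce
  have hTn' : 2 * g * T < n := by
    have : (T : ℝ) * (2 * g) < n := (lt_div_iff₀ (by positivity)).1 hTn
    exact_mod_cast (show ((2 * g * T : ℕ) : ℝ) < n by push_cast; linarith)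
  obtain ⟨j₀, hj₀T, -, rfl⟩ := hB.1
  have hbB : ∀ k < T, ‖b k‖ ≤ ‖b j₀‖ := fun k hk => by
    by_cases hbk : b k = 0
    · simp [hbk]
    · exact hB.2 ⟨k, hk, hbk, rfl⟩
  obtain ⟨j, hjT, h2j, hbj⟩ := exists_two_mul_le_norm_eq_of_conj_symm hbconj hj₀T
  have hv : (j / T : ℝ) ∈ Set.Icc (0 : ℝ) (1 / 2) := by
    refine ⟨by positivity, div_le_of_le_mul₀ (Nat.cast_nonneg _) (by norm_num) ?_⟩
    have : (2 * j : ℝ) ≤ T := by exact_mod_cast h2j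
    linarith
  have hsignal : dtft (fun t : Fin n => μ ((t : ℕ) + 1)) (j / T)
      = ∑ k ∈ range T, b k * harmonicKernel n T (k - j) := by
    simp only [hμ]; exact dtft_sum_harmonics b _ T j
  have hleak := norm_le_norm_sum_harmonicKernel_add hbB (by omega) hTn' hjT
  rw [hbj, ← hsignal] at hleak
  have hy := norm_dtft_le_biSup (fun t => μ ((t : ℕ) + 1) + ε t ω) hv
  have hε := norm_dtft_le_biSup (fun t => (ε t ω : ℂ)) hv
  rw [dtft_add] at hy
  have htri := norm_le_add_norm_add (dtft (fun t : Fin n => μ ((t : ℕ) + 1)) (j / T))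
    (dtft (fun t => (ε t ω : ℂ)) (j / T))
  rw [one_div_mul_eq_div, le_div_iff₀ (sub_pos.2 hU₂)]
  linarith

/-- Lemma 3 of the paper: a data-driven upper bound on the largest present-frequency
magnitude `B`. If `πU₂ < 1`, then pointwise,
`B ≤ (1/(1 − πU₂)) (sup_{v∈[0,1/2]} |ε̃(v)| + sup_{v∈[0,1/2]} |ỹ(v)|)`. -/
theorem magnitude_data_driven_bound
    {Ω : Type*} [MeasureSpace Ω] (hP : IsProbabilityMeasure (ℙ : Measure Ω))
    (n : ℕ) (hn : 0 < n) (σ : ℝ) (hσ : 0 < σ)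
    (ε : Fin n → Ω → ℝ)
    (hmeas : ∀ t, Measurable (ε t))
    (hindep : iIndepFun ε ℙ)
    (hsubg : ∀ t (l : ℝ), ∫ ω, Real.exp (l * ε t ω) ∂ℙ ≤ Real.exp (σ ^ 2 * l ^ 2 / 2))
    (εdft : ℝ → Ω → ℂ)
    (hεdft : ∀ v ω, εdft v ω = (1 / (n : ℂ)) *
        ∑ t : Fin n, (ε t ω : ℂ) * Complex.exp (-(2 * Real.pi * Complex.I * v * ((t : ℕ) + 1))))
    (g T : ℕ) (hg2 : 2 ≤ g) (hgn : Real.sqrt n ≤ g)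
    (hT : 0 < T) (hTn : (T : ℝ) < n / (2 * g))
    (b : ℕ → ℂ)
    (hb0 : (b 0).im = 0)
    (hbconj : ∀ j, 1 ≤ j → j ≤ T - 1 → b j = starRingEnd ℂ (b (T - j)))
    (hbne : ∃ j < T, b j ≠ 0)
    (μ : ℕ → ℂ)
    (hμ : ∀ t, μ t = ∑ j ∈ Finset.range T,
        b j * Complex.exp (2 * Real.pi * Complex.I * j * t / T))
    (ydft : ℝ → Ω → ℂ)
    (hydft : ∀ v ω, ydft v ω = (1 / (n : ℂ)) *
        ∑ t : Fin n, (μ ((t : ℕ) + 1) + (ε t ω : ℂ)) *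
          Complex.exp (-(2 * Real.pi * Complex.I * v * ((t : ℕ) + 1))))
    (B : ℝ) (hB : IsGreatest {x : ℝ | ∃ j < T, b j ≠ 0 ∧ x = ‖b j‖} B)
    (hU₂ : Real.pi * leakageU₂ n g < 1) :
    ∀ ω : Ω, B ≤ (1 / (1 - Real.pi * leakageU₂ n g)) *
        ((⨆ v ∈ Set.Icc (0 : ℝ) (1 / 2), ‖εdft v ω‖) +
          ⨆ v ∈ Set.Icc (0 : ℝ) (1 / 2), ‖ydft v ω‖) :=
  magnitude_data_driven_bound_general n ε εdft hεdft g T hg2 hTn b hbconj μ hμ ydft hydft B hB hU₂
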